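/- arXiv:math/0411564 — 2 statements merged into one kernel-verified Lean document; each statement's English description precedes it below -/
import Mathlib

section
/- Let $X = \{x \in \mathbb{R}^3 : x_1^2 + x_2^2 - x_3^2 = 1\}$ be the one-sheeted hyperboloid and $\Xi_+ = \{\zeta = \xi + i\eta \in \mathbb{C}^3 : \langle\zeta,\zeta\rangle = 0, \ \langle\xi,\xi\rangle = \langle\eta,\eta\rangle > 1\}$ where $\langle z,w\rangle = z_1w_1 + z_2w_2 - z_3w_3$. Then for every $\zeta \in \Xi_+$ and every $x \in X$ one has $\langle x, \zeta\rangle \ne 1$; that is, the complex horosphere $E(\zeta) = \{z \in \mathbb{C}^3 : \langle z,z\rangle = 1,\ \langle z,\zeta\rangle = 1\}$ contains no real points. -/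
/-- Horospheres parameterized by `Ξ₊` have no real points: if `x` lies on the real
one-sheeted hyperboloid `⟨x,x⟩ = 1` and `ζ = ξ + iη` is isotropic for the complex bilinear
form `⟨z,w⟩ = z₁w₁ + z₂w₂ - z₃w₃` with `⟨ξ,ξ⟩ = ⟨η,η⟩ > 1`, then `⟨x,ζ⟩ ≠ 1`, i.e. the
complex horosphere `E(ζ) = {z : ⟨z,z⟩ = 1, ⟨z,ζ⟩ = 1}` does not meet the real hyperboloid. -/
theorem stmt5 (x : Fin 3 → ℝ) (hx : x 0 ^ 2 + x 1 ^ 2 - x 2 ^ 2 = 1)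
    (ζ : Fin 3 → ℂ) (ξ η : Fin 3 → ℝ)
    (hre : ∀ j, ζ j = (ξ j : ℂ) + (η j : ℂ) * Complex.I)
    (hiso : ζ 0 * ζ 0 + ζ 1 * ζ 1 - ζ 2 * ζ 2 = 0)
    (hQ : ξ 0 ^ 2 + ξ 1 ^ 2 - ξ 2 ^ 2 = η 0 ^ 2 + η 1 ^ 2 - η 2 ^ 2)
    (hgt : 1 < ξ 0 ^ 2 + ξ 1 ^ 2 - ξ 2 ^ 2) :
    (x 0 : ℂ) * ζ 0 + (x 1 : ℂ) * ζ 1 - (x 2 : ℂ) * ζ 2 ≠ 1 := by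
  intro h
  simp only [hre] at h hiso
  rw [Complex.ext_iff] at h hiso
  simp only [Complex.add_re, Complex.add_im, Complex.sub_re, Complex.sub_im, Complex.mul_re,
    Complex.mul_im, Complex.ofReal_re, Complex.ofReal_im, Complex.I_re, Complex.I_im,
    Complex.one_re, Complex.one_im, Complex.zero_re, Complex.zero_im] at h hiso
  obtain ⟨hxξ, hxη⟩ := h
  obtain ⟨_, hξη⟩ := hiso
  have h1 : ξ 0 * x 0 + ξ 1 * x 1 - ξ 2 * x 2 = 1 := by linear_combination hxξ
  have h2 : η 0 * x 0 + η 1 * x 1 - η 2 * x 2 = 0 := by linear_combination hxη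
  have h3 : ξ 0 * η 0 + ξ 1 * η 1 - ξ 2 * η 2 = 0 := by linear_combination hξη / 2
  -- Gram determinant identity: det Gram(ξ,η,x) = -(det[ξ;η;x])²
  have key : (ξ 0 ^ 2 + ξ 1 ^ 2 - ξ 2 ^ 2) * (η 0 ^ 2 + η 1 ^ 2 - η 2 ^ 2) *
        (x 0 ^ 2 + x 1 ^ 2 - x 2 ^ 2)
      + 2 * (ξ 0 * η 0 + ξ 1 * η 1 - ξ 2 * η 2) * (η 0 * x 0 + η 1 * x 1 - η 2 * x 2) *
        (ξ 0 * x 0 + ξ 1 * x 1 - ξ 2 * x 2)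
      - (ξ 0 ^ 2 + ξ 1 ^ 2 - ξ 2 ^ 2) * (η 0 * x 0 + η 1 * x 1 - η 2 * x 2) ^ 2
      - (η 0 ^ 2 + η 1 ^ 2 - η 2 ^ 2) * (ξ 0 * x 0 + ξ 1 * x 1 - ξ 2 * x 2) ^ 2
      - (x 0 ^ 2 + x 1 ^ 2 - x 2 ^ 2) * (ξ 0 * η 0 + ξ 1 * η 1 - ξ 2 * η 2) ^ 2
      = -(ξ 0 * (η 1 * x 2 - η 2 * x 1) - ξ 1 * (η 0 * x 2 - η 2 * x 0)
          + ξ 2 * (η 0 * x 1 - η 1 * x 0)) ^ 2 := by ring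
  rw [h1, h2, h3, hx, ← hQ] at key
  nlinarith [sq_nonneg (ξ 0 * (η 1 * x 2 - η 2 * x 1) - ξ 1 * (η 0 * x 2 - η 2 * x 0)
      + ξ 2 * (η 0 * x 1 - η 1 * x 0)), hgt, key]
end

section
/- Let $X = \{x \in \mathbb{R}^3 : x_1^2+x_2^2-x_3^2 = 1\}$, $\langle z,w\rangle = z_1w_1+z_2w_2-z_3w_3$, and $x_0 = (1,0,0)^T$. For the kernel $\mathcal{K}(\zeta) = 1/(\langle\zeta,x_0\rangle - 1)$ on $\Xi_+ = \{\zeta = \xi+i\eta : \langle\zeta,\zeta\rangle = 0, \langle\xi,\xi\rangle = \langle\eta,\eta\rangle > 1\}$: the function $\zeta \mapsto \mathcal{K}(\zeta)$ is well defined (denominator nonzero) and holomorphic on $\Xi_+$. -/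
def bform (z w : Fin 3 → ℂ) : ℂ := z 0 * w 0 + z 1 * w 1 - z 2 * w 2

def XiPlus : Set (Fin 3 → ℂ) :=
  {ζ | bform ζ ζ = 0 ∧
    (ζ 0).re ^ 2 + (ζ 1).re ^ 2 - (ζ 2).re ^ 2
      = (ζ 0).im ^ 2 + (ζ 1).im ^ 2 - (ζ 2).im ^ 2 ∧
    1 < (ζ 0).re ^ 2 + (ζ 1).re ^ 2 - (ζ 2).re ^ 2}

lemma key : ∀ ζ ∈ XiPlus, bform ζ ![1, 0, 0] - 1 ≠ 0 := by
  rintro ζ ⟨h0, h1, h2⟩ h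
  have hz : ζ 0 = 1 := by
    have hb : bform ζ ![1,0,0] = ζ 0 := by simp [bform]
    rw [hb] at h; exact sub_eq_zero.mp h
  have hre : (ζ 0).re = 1 := by rw [hz]; simp
  have him : (ζ 0).im = 0 := by rw [hz]; simp
  have hIm := congrArg Complex.im h0
  simp only [bform, Complex.add_im, Complex.sub_im, Complex.mul_im, hre, him,
    Complex.zero_im] at hIm
  rw [hre, him] at h1; rw [hre] at h2
  set a := (ζ 1).re; set b := (ζ 1).im; set c := (ζ 2).re; set d := (ζ 2).im
  have hp : a ^ 2 - c ^ 2 > 0 := by nlinarith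
  have hq : b ^ 2 - d ^ 2 > 1 := by nlinarith
  nlinarith [mul_pos hp (by linarith : (0:ℝ) < b ^ 2 - d ^ 2),
    sq_nonneg (a * d - c * b), sq_nonneg (a * b - c * d)]

/-- The horospherical Cauchy kernel `𝒦(ζ) = 1/(⟨ζ,x₀⟩ - 1)` is well defined (its
denominator does not vanish) and holomorphic on `Ξ₊`. -/
theorem stmt9 :
    (∀ ζ ∈ XiPlus, bform ζ ![1, 0, 0] - 1 ≠ 0) ∧
    DifferentiableOn ℂ (fun ζ : Fin 3 → ℂ => (bform ζ ![1, 0, 0] - 1)⁻¹) XiPlus := by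
  refine ⟨key, ?_⟩
  apply DifferentiableOn.inv
  · apply DifferentiableOn.sub_const
    have h : (fun ζ : Fin 3 → ℂ => bform ζ ![1,0,0]) = fun ζ : Fin 3 → ℂ => ζ 0 := by
      funext ζ; simp [bform]
    rw [h]
    exact (ContinuousLinearMap.proj (R := ℂ) (φ := fun _ : Fin 3 => ℂ) 0).differentiable.differentiableOn
  · exact key
end
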